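/- Let f₀,...,fₙ be real polynomials with f₀ a nonzero constant, satisfying: whenever fₖ(x₀) = 0 for 0 < k < n, then f_{k-1}(x₀)·f_{k+1}(x₀) < 0. Let x₀ be a real root of some fₖ with 0 < k < n but not a root of fₙ. Then there exists δ > 0 such that var(f(x)) is the same for all x in (x₀ - δ, x₀ + δ) \ Z, where Z is the set of all real roots of f₀,...,fₙ and var counts sign changes after deleting zero entries. -/

import Mathlib

open Polynomial Finset

/-!
Near `x₀` every `fⱼ` with `fⱼ(x₀) ≠ 0` keeps its sign, so off `Z` the variation can only
change at the pairs around an index `j` with `fⱼ(x₀) = 0`. For such `j` the neighbours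
`fⱼ₋₁, fⱼ₊₁` are nonzero at `x₀` with opposite signs, hence the triple `fⱼ₋₁, fⱼ, fⱼ₊₁`
contributes exactly one sign change whatever the sign of `fⱼ(x)`. The variation at every
`x` near `x₀` is therefore given by a formula in the values at `x₀` alone.
-/

/-- This is the variation of `a 0, …, a n` only when these are all nonzero; the paper's
variation deletes zero entries first. -/
noncomputable def signVar (a : ℕ → ℝ) (n : ℕ) : ℕ :=
  #{j ∈ range n | a j * a (j + 1) < 0}

theorem signVar_succ (a : ℕ → ℝ) (n : ℕ) :
    signVar a (n + 1) = signVar a n + if a n * a (n + 1) < 0 then 1 else 0 := by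
  simp only [signVar, card_filter, sum_range_succ]

theorem card_filter_range_succ (p : ℕ → Prop) [DecidablePred p] (n : ℕ) :
    #{j ∈ range (n + 1) | p j} = #{j ∈ range n | p j} + if p n then 1 else 0 := by
  simp only [card_filter, sum_range_succ]

theorem mul_neg_iff_of_mul_pos {a a' b b' : ℝ} (ha : 0 < a * b) (ha' : 0 < a' * b') :
    b * b' < 0 ↔ a * a' < 0 := by
  have hprod : 0 < (a * a') * (b * b') := by nlinarith
  constructor <;> intro h <;> nlinarith

theorem signChange_add_signChange_of_mul_neg {a b c : ℝ} (hac : a * c < 0) (hb : b ≠ 0) :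
    ((if a * b < 0 then 1 else 0) + if b * c < 0 then 1 else 0) = 1 := by
  have hb2 : 0 < b * b := mul_self_pos.mpr hb
  by_cases hab : a * b < 0
  · have : ¬ b * c < 0 := fun hbc => by nlinarith
    simp [hab, this]
  · have : b * c < 0 := by nlinarith
    simp [hab, this]

theorem signVar_eq_add_card_zeros (a b : ℕ → ℝ) (n : ℕ) (ha₀ : a 0 ≠ 0) (haₙ : a n ≠ 0)
    (halt : ∀ j, 0 < j → j < n → a j = 0 → a (j - 1) * a (j + 1) < 0)
    (hb : ∀ j ≤ n, b j ≠ 0) (hsign : ∀ j ≤ n, a j ≠ 0 → 0 < a j * b j) :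
    signVar b n = signVar a n + #{j ∈ range n | a (j + 1) = 0} := by
  induction n using Nat.strong_induction_on with
  | _ n ih =>
  rcases n with _ | n
  · simp [signVar]
  by_cases han : a n = 0
  · obtain ⟨m, rfl⟩ : ∃ m, n = m + 1 :=
      Nat.exists_eq_add_one.mpr (Nat.pos_of_ne_zero fun h => ha₀ (h ▸ han))
    have hout : a m * a (m + 1 + 1) < 0 := halt (m + 1) m.succ_pos (by omega) han
    have ham : a m ≠ 0 := fun h => by simp [h] at hout
    have ih' := ih m (by omega) ham (fun j hj hjm => halt j hj (by omega))
      (fun j hj => hb j (by omega)) (fun j hj => hsign j (by omega))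
    have hb_out : b m * b (m + 1 + 1) < 0 := by
      have := hsign m (by omega) ham
      have := hsign (m + 1 + 1) le_rfl haₙ
      nlinarith
    have hpair := signChange_add_signChange_of_mul_neg hb_out (hb (m + 1) (by omega))
    simp only [signVar_succ, card_filter_range_succ, ih', han, haₙ, mul_zero, zero_mul,
      lt_irrefl, if_true, if_false]
    omega
  · have ih' := ih n (by omega) han (fun j hj hjn => halt j hj (by omega))
      (fun j hj => hb j (by omega)) (fun j hj => hsign j (by omega))
    simp only [signVar_succ, card_filter_range_succ, ih', haₙ, if_false,
      mul_neg_iff_of_mul_pos (hsign n (by omega) han) (hsign (n + 1) le_rfl haₙ)]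
    omega

theorem Polynomial.eventually_forall_mul_eval_pos (f : ℕ → ℝ[X]) (n : ℕ) (x₀ : ℝ) :
    ∀ᶠ x in nhds x₀, ∀ j ≤ n, (f j).eval x₀ ≠ 0 → 0 < (f j).eval x₀ * (f j).eval x := by
  refine (Set.finite_Iic n).eventually_all.mpr fun j _ => ?_
  by_cases hj : (f j).eval x₀ = 0
  · exact Filter.Eventually.of_forall fun _ h => absurd hj h
  · have hcont : Continuous fun x => (f j).eval x₀ * (f j).eval x :=
      continuous_const.mul (f j).continuous
    filter_upwards [continuousAt_const.eventually_lt hcont.continuousAt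
      (mul_self_pos.mpr hj)] with x hx _
    exact hx

theorem stmt_15_general (n : ℕ) (f : ℕ → Polynomial ℝ)
    (h0 : ∃ c : ℝ, c ≠ 0 ∧ f 0 = Polynomial.C c)
    (h2 : ∀ k : ℕ, 0 < k → k < n → ∀ x₀ : ℝ, (f k).eval x₀ = 0 →
      (f (k-1)).eval x₀ * (f (k+1)).eval x₀ < 0)
    (Z : Set ℝ) (hZ : Z = {x : ℝ | ∃ k ≤ n, (f k).eval x = 0})
    (x₀ : ℝ) (k : ℕ) (hn : (f n).eval x₀ ≠ 0) :
    ∃ δ > 0, ∀ x ∈ Set.Ioo (x₀ - δ) (x₀ + δ), ∀ y ∈ Set.Ioo (x₀ - δ) (x₀ + δ),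
      x ∉ Z → y ∉ Z →
      ((Finset.range n).filter (fun j => (f j).eval x * (f (j+1)).eval x < 0)).card =
      ((Finset.range n).filter (fun j => (f j).eval y * (f (j+1)).eval y < 0)).card := by
  obtain ⟨c, hc, hf0⟩ := h0
  have hf0x₀ : (f 0).eval x₀ ≠ 0 := by simpa [hf0] using hc
  obtain ⟨δ, hδ, hsign⟩ :=
    Metric.eventually_nhds_iff_ball.mp (Polynomial.eventually_forall_mul_eval_pos f n x₀)
  have hvar : ∀ z ∈ Set.Ioo (x₀ - δ) (x₀ + δ), z ∉ Z →
      signVar (fun j => (f j).eval z) n =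
        signVar (fun j => (f j).eval x₀) n + #{j ∈ range n | (f (j + 1)).eval x₀ = 0} := by
    intro z hz hzZ
    rw [← Real.ball_eq_Ioo] at hz
    exact signVar_eq_add_card_zeros _ _ n hf0x₀ hn (fun j hj hjn => h2 j hj hjn x₀)
      (fun j hj hzero => hzZ (hZ ▸ ⟨j, hj, hzero⟩)) (hsign z hz)
  exact ⟨δ, hδ, fun x hx y hy hxZ hyZ => (hvar x hx hxZ).trans (hvar y hy hyZ).symm⟩

theorem stmt_15 (n : ℕ) (f : ℕ → Polynomial ℝ)
    (h0 : ∃ c : ℝ, c ≠ 0 ∧ f 0 = Polynomial.C c)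
    (h2 : ∀ k : ℕ, 0 < k → k < n → ∀ x₀ : ℝ, (f k).eval x₀ = 0 →
      (f (k-1)).eval x₀ * (f (k+1)).eval x₀ < 0)
    (Z : Set ℝ) (hZ : Z = {x : ℝ | ∃ k ≤ n, (f k).eval x = 0})
    (x₀ : ℝ) (k : ℕ) (hk1 : 0 < k) (hk2 : k < n)
    (hroot : (f k).eval x₀ = 0) (hn : (f n).eval x₀ ≠ 0) :
    ∃ δ > 0, ∀ x ∈ Set.Ioo (x₀ - δ) (x₀ + δ), ∀ y ∈ Set.Ioo (x₀ - δ) (x₀ + δ),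
      x ∉ Z → y ∉ Z →
      ((Finset.range n).filter (fun j => (f j).eval x * (f (j+1)).eval x < 0)).card =
      ((Finset.range n).filter (fun j => (f j).eval y * (f (j+1)).eval y < 0)).card :=
  stmt_15_general n f h0 h2 Z hZ x₀ k hn
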